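/- (Key identity of magnetic perturbation theory, at the level of integral kernels.) Let L > 0, ξ, z ∈ ℂ, δω ∈ ℝ, and let G, g : Λ × Λ → ℂ be continuous and bounded. Assume the resolvent-type equation ξ g(x,x') = z ∫_Λ G(x,y) g(y,x') dy + z G(x,x') holds for all x, x' ∈ Λ. Define the regularized kernels G̃(x,x') := e^{i δω φ(x,x')} G(x,x') and g̃(x,x') := e^{i δω φ(x,x')} g(x,x'), and set r̂(x,x') := −z e^{i δω φ(x,x')} ∫_Λ (e^{i δω fl(x,y,x')} − 1) G(x,y) g(y,x') dy. Then for all x, x' ∈ Λ: ξ g̃(x,x') = z ∫_Λ G̃(x,y) g̃(y,x') dy + z G̃(x,x') + r̂(x,x'). -/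

import Mathlib

/-! Since `φ(x,y) + φ(y,x') = φ(x,x') + fl(x,y,x')`, the product of the phases
`e^{iδωφ(x,y)} e^{iδωφ(y,x')}` equals `e^{iδωφ(x,x')} (1 + (e^{iδω fl(x,y,x')} − 1))`.
Splitting the integral of `G̃ g̃` along this sum and multiplying the resolvent equation by
`e^{iδωφ(x,x')}` gives the identity. The only analytic input is that `y ↦ G(x,y) g(y,x')` is
integrable on `Λ`, being continuous and bounded on a set of finite measure. -/

open MeasureTheory Real

noncomputable section

/-- The open cube `Λ = (−L/2, L/2)³ ⊂ ℝ³`. -/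
def cube (L : ℝ) : Set (EuclideanSpace ℝ (Fin 3)) :=
  {x | ∀ i, x i ∈ Set.Ioo (-(L / 2)) (L / 2)}

/-- The magnetic phase `φ(x,x') = (x₂x₁' − x₁x₂')/2`. -/
def phi (x x' : EuclideanSpace ℝ (Fin 3)) : ℝ := (x 1 * x' 0 - x 0 * x' 1) / 2

/-- The magnetic flux through the triangle with vertices `x`, `y`, `x'`. -/
def fl (x y x' : EuclideanSpace ℝ (Fin 3)) : ℝ := phi x y + phi y x' + phi x' x

lemma phi_add_phi (x y x' : EuclideanSpace ℝ (Fin 3)) :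
    phi x y + phi y x' = phi x x' + fl x y x' := by
  unfold fl phi; ring

@[fun_prop]
lemma continuous_fl (x x' : EuclideanSpace ℝ (Fin 3)) : Continuous fun y => fl x y x' := by
  unfold fl phi; fun_prop

lemma cexp_phi_mul_cexp_phi (δω : ℝ) (x y x' : EuclideanSpace ℝ (Fin 3)) :
    Complex.exp (Complex.I * δω * (phi x y : ℝ)) * Complex.exp (Complex.I * δω * (phi y x' : ℝ)) =
      Complex.exp (Complex.I * δω * (phi x x' : ℝ)) *
        Complex.exp (Complex.I * δω * (fl x y x' : ℝ)) := by
  rw [← Complex.exp_add, ← Complex.exp_add]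
  congr 1
  have h := congrArg (fun t : ℝ => Complex.I * δω * t) (phi_add_phi x y x')
  push_cast at h
  linear_combination h

lemma norm_cexp_I_mul_ofReal_sub_one_le_two (t : ℝ) : ‖Complex.exp (Complex.I * t) - 1‖ ≤ 2 :=
  calc ‖Complex.exp (Complex.I * t) - 1‖ ≤ ‖Complex.exp (Complex.I * t)‖ + ‖(1 : ℂ)‖ :=
        norm_sub_le _ _
    _ = 2 := by rw [Complex.norm_exp_I_mul_ofReal, norm_one]; norm_num

lemma cube_eq_preimage_pi (L : ℝ) :
    cube L = WithLp.ofLp ⁻¹' Set.univ.pi fun _ : Fin 3 => Set.Ioo (-(L / 2)) (L / 2) := by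
  ext x; simp [cube]

lemma measurableSet_cube (L : ℝ) : MeasurableSet (cube L) := by
  rw [cube_eq_preimage_pi]
  exact (MeasurableSet.univ_pi fun _ => measurableSet_Ioo).preimage
    (PiLp.volume_preserving_ofLp _).measurable

lemma volume_cube (L : ℝ) : volume (cube L) = ENNReal.ofReal L ^ 3 := by
  rw [cube_eq_preimage_pi, (PiLp.volume_preserving_ofLp _).measure_preimage
    (MeasurableSet.univ_pi fun _ => measurableSet_Ioo).nullMeasurableSet, Real.volume_pi_Ioo]
  simp

lemma ContinuousOn.integrableOn_of_forall_norm_le {X E : Type*} [TopologicalSpace X]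
    [MeasurableSpace X] [OpensMeasurableSpace X] [NormedAddCommGroup E]
    [SecondCountableTopologyEither X E] {μ : Measure X} {f : X → E} {s : Set X} {C : ℝ}
    (hf : ContinuousOn f s) (hs : MeasurableSet s) (hμs : μ s ≠ ⊤) (hC : ∀ x ∈ s, ‖f x‖ ≤ C) :
    IntegrableOn f s μ :=
  ⟨hf.aestronglyMeasurable hs, .restrict_of_bounded C hμs.lt_top (ae_restrict_of_forall_mem hs hC)⟩

lemma integrableOn_kernel_mul_of_bounded {X : Type*} [TopologicalSpace X] [MeasurableSpace X]
    [OpensMeasurableSpace X] [SecondCountableTopology X] {μ : Measure X} {s : Set X}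
    (hs : MeasurableSet s) (hμs : μ s ≠ ⊤) {G g : X → X → ℂ}
    (hGc : ContinuousOn (Function.uncurry G) (s ×ˢ s))
    (hgc : ContinuousOn (Function.uncurry g) (s ×ˢ s))
    (hGb : ∃ C : ℝ, ∀ x ∈ s, ∀ x' ∈ s, ‖G x x'‖ ≤ C)
    (hgb : ∃ C : ℝ, ∀ x ∈ s, ∀ x' ∈ s, ‖g x x'‖ ≤ C) {x x' : X} (hx : x ∈ s) (hx' : x' ∈ s) :
    IntegrableOn (fun y => G x y * g y x') s μ := by
  obtain ⟨CG, hCG⟩ := hGb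
  obtain ⟨Cg, hCg⟩ := hgb
  have hG : ContinuousOn (fun y => G x y) s :=
    hGc.comp (continuous_const.prodMk continuous_id).continuousOn fun y hy => ⟨hx, hy⟩
  have hg : ContinuousOn (fun y => g y x') s :=
    hgc.comp (continuous_id.prodMk continuous_const).continuousOn fun y hy => ⟨hy, hx'⟩
  refine (hG.mul hg).integrableOn_of_forall_norm_le (C := CG * Cg) hs hμs fun y hy => ?_
  rw [norm_mul]
  exact mul_le_mul (hCG x hx y hy) (hCg y hy x' hx') (norm_nonneg _)
    ((norm_nonneg _).trans (hCG x hx y hy))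

theorem regularized_kernel_identity_of_integrableOn {μ : Measure (EuclideanSpace ℝ (Fin 3))}
    {s : Set (EuclideanSpace ℝ (Fin 3))} (ξ z : ℂ) (δω : ℝ)
    (G g : EuclideanSpace ℝ (Fin 3) → EuclideanSpace ℝ (Fin 3) → ℂ)
    (x x' : EuclideanSpace ℝ (Fin 3)) (hint : IntegrableOn (fun y => G x y * g y x') s μ)
    (hres : ξ * g x x' = z * (∫ y in s, G x y * g y x' ∂μ) + z * G x x') :
    ξ * (Complex.exp (Complex.I * (δω : ℂ) * (phi x x' : ℝ)) * g x x') =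
      z * (∫ y in s,
            (Complex.exp (Complex.I * (δω : ℂ) * (phi x y : ℝ)) * G x y) *
              (Complex.exp (Complex.I * (δω : ℂ) * (phi y x' : ℝ)) * g y x') ∂μ) +
      z * (Complex.exp (Complex.I * (δω : ℂ) * (phi x x' : ℝ)) * G x x') +
      -z * Complex.exp (Complex.I * (δω : ℂ) * (phi x x' : ℝ)) *
        (∫ y in s,
          (Complex.exp (Complex.I * (δω : ℂ) * (fl x y x' : ℝ)) - 1) *
            G x y * g y x' ∂μ) := by
  have hflux : IntegrableOn (fun y =>
      (Complex.exp (Complex.I * (δω : ℂ) * (fl x y x' : ℝ)) - 1) * G x y * g y x') s μ := by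
    have hbound : ∀ y, ‖Complex.exp (Complex.I * (δω : ℂ) * (fl x y x' : ℝ)) - 1‖ ≤ 2 :=
      fun y => by
        simpa only [Complex.ofReal_mul, mul_assoc] using
          norm_cexp_I_mul_ofReal_sub_one_le_two (δω * fl x y x')
    simpa only [IntegrableOn, mul_assoc] using
      hint.bdd_mul (Continuous.aestronglyMeasurable (by fun_prop)) (.of_forall hbound)
  have hsplit : (∫ y in s,
      (Complex.exp (Complex.I * (δω : ℂ) * (phi x y : ℝ)) * G x y) *
        (Complex.exp (Complex.I * (δω : ℂ) * (phi y x' : ℝ)) * g y x') ∂μ) =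
      Complex.exp (Complex.I * (δω : ℂ) * (phi x x' : ℝ)) *
        ((∫ y in s, (Complex.exp (Complex.I * (δω : ℂ) * (fl x y x' : ℝ)) - 1) *
          G x y * g y x' ∂μ) + ∫ y in s, G x y * g y x' ∂μ) := by
    rw [← integral_add hflux hint, ← integral_const_mul]
    congr 1
    funext y
    linear_combination (G x y * g y x') * cexp_phi_mul_cexp_phi δω x y x'
  rw [hsplit]
  linear_combination Complex.exp (Complex.I * (δω : ℂ) * (phi x x' : ℝ)) * hres

theorem regularized_kernel_identity (L : ℝ) (ξ z : ℂ) (δω : ℝ)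
    (G g : EuclideanSpace ℝ (Fin 3) → EuclideanSpace ℝ (Fin 3) → ℂ)
    (hGc : ContinuousOn (Function.uncurry G) (cube L ×ˢ cube L))
    (hgc : ContinuousOn (Function.uncurry g) (cube L ×ˢ cube L))
    (hGb : ∃ C : ℝ, ∀ x ∈ cube L, ∀ x' ∈ cube L, ‖G x x'‖ ≤ C)
    (hgb : ∃ C : ℝ, ∀ x ∈ cube L, ∀ x' ∈ cube L, ‖g x x'‖ ≤ C)
    (hres : ∀ x ∈ cube L, ∀ x' ∈ cube L,
      ξ * g x x' = z * (∫ y in cube L, G x y * g y x') + z * G x x') :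
    ∀ x ∈ cube L, ∀ x' ∈ cube L,
      ξ * (Complex.exp (Complex.I * (δω : ℂ) * (phi x x' : ℝ)) * g x x') =
        z * (∫ y in cube L,
              (Complex.exp (Complex.I * (δω : ℂ) * (phi x y : ℝ)) * G x y) *
                (Complex.exp (Complex.I * (δω : ℂ) * (phi y x' : ℝ)) * g y x')) +
        z * (Complex.exp (Complex.I * (δω : ℂ) * (phi x x' : ℝ)) * G x x') +
        -z * Complex.exp (Complex.I * (δω : ℂ) * (phi x x' : ℝ)) *
          (∫ y in cube L,
            (Complex.exp (Complex.I * (δω : ℂ) * (fl x y x' : ℝ)) - 1) *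
              G x y * g y x') := by
  intro x hx x' hx'
  have hvol : volume (cube L) ≠ ⊤ := by simp [volume_cube]
  exact regularized_kernel_identity_of_integrableOn ξ z δω G g x x'
    (integrableOn_kernel_mul_of_bounded (measurableSet_cube L) hvol hGc hgc hGb hgb hx hx')
    (hres x hx x' hx')
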